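/- arXiv:1206.5863 — 2 statements merged into one kernel-verified Lean document; each statement's English description precedes it below -/
import Mathlib

section
/- Let m be a prime power, and l, s, t positive integers with m ≥ l-1 and 2t-1 ≤ l; set q = (s-1)m+1. If an orthogonal array OA(t,l,s) of index 1 exists, then there exists a q-ary c-frameproof code of length l with cardinality ((s^t - 1)/(s-1)^t)(q-1)^t, where c ≥ t is any integer such that l = c(t-1)+r for some r with t ≤ r ≤ c. -/
open Finset

/-- The descendant set of a set of words. -/
def desc {l : ℕ} {F : Type*} (P : Set (Fin l → F)) : Set (Fin l → F) :=
  {x | ∀ i : Fin l, ∃ y ∈ P, x i = y i}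

/-- `C` is a `c`-frameproof code of length `l`. -/
def IsFrameproof {l : ℕ} {F : Type*} (c : ℕ) (C : Set (Fin l → F)) : Prop :=
  ∀ P : Finset (Fin l → F), ↑P ⊆ C → P.card ≤ c → desc ↑P ∩ C = ↑P

/-- Property P(t) with special element `inf`: each codeword has at most `t-1`
coordinates equal to `inf`, and distinct codewords cannot agree in `t`
coordinates all of whose values are not `inf`. -/
def PropertyP {l : ℕ} {S : Type*} [DecidableEq S] (t : ℕ) (inf : S)
    (C : Set (Fin l → S)) : Prop :=
  (∀ x ∈ C, (Finset.univ.filter fun i => x i = inf).card ≤ t - 1) ∧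
  ∀ x ∈ C, ∀ y ∈ C, ∀ I : Finset (Fin l), t ≤ I.card →
    (∀ i ∈ I, x i = y i ∧ x i ≠ inf) → x = y

/-- `A` is an orthogonal array of strength `t` and index 1:
in any `t` distinct rows, every `t`-tuple appears exactly once as a column. -/
def IsOA {l N : ℕ} {S : Type*} (t : ℕ) (A : Fin l → Fin N → S) : Prop :=
  ∀ rows : Fin t → Fin l, Function.Injective rows →
    ∀ v : Fin t → S, ∃! j : Fin N, ∀ k : Fin t, A (rows k) j = v k

/-!
Fix a reference column `j₀` of the orthogonal array and `l` distinct points of the projective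
line over `𝔽_m`. The codeword indexed by a column `j ≠ j₀` and a polynomial `p` of degree `< t`
carries `∞` in the rows where `j` agrees with `j₀`, and elsewhere the symbol of `j` (one of the
`s - 1` symbols different from that of `j₀`) paired with the value of `p` at the row's point.
Distinct columns agree in at most `t - 1` rows and distinct polynomials (extended Reed–Solomon
code) in at most `t - 1` points, so the code has property P(t). A descendant `x` of at most `c`
codewords but not one of them must cover its `l` coordinates by at most `t - 1` symbols `∞` and
at most `t - 1` non-`∞` agreements with each parent, which contradicts `l > (c + 1)(t - 1)`.
-/

open Polynomial

section Frameproof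

variable {l t c : ℕ} {S : Type*} [DecidableEq S] {inf : S} {C : Set (Fin l → S)}

theorem PropertyP.isFrameproof (hP : PropertyP t inf C) (hl : (c + 1) * (t - 1) < l) :
    IsFrameproof c C := by
  intro P hPC hPc
  refine subset_antisymm ?_ fun y hy => ⟨fun _ => ⟨y, hy, rfl⟩, hPC hy⟩
  rintro x ⟨hxd, hxC⟩
  by_contra hxP
  set agree : (Fin l → S) → Finset (Fin l) :=
    fun y => univ.filter fun i => x i = y i ∧ x i ≠ inf
  have hagree : ∀ y ∈ P, #(agree y) ≤ t - 1 := by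
    intro y hy
    by_contra! h
    have hxy := hP.2 x hxC y (hPC hy) (agree y) (by omega) fun i hi => (mem_filter.1 hi).2
    exact hxP (hxy ▸ hy)
  have hcover : (univ : Finset (Fin l)) ⊆ univ.filter (x · = inf) ∪ P.biUnion agree := by
    intro i _
    by_cases hi : x i = inf
    · exact mem_union_left _ (mem_filter.2 ⟨mem_univ i, hi⟩)
    · obtain ⟨y, hy, hxy⟩ := hxd i
      exact mem_union_right _ (mem_biUnion.2 ⟨y, hy, mem_filter.2 ⟨mem_univ i, hxy, hi⟩⟩)
  have hbiUnion : #(P.biUnion agree) ≤ c * (t - 1) :=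
    calc #(P.biUnion agree) ≤ ∑ y ∈ P, #(agree y) := card_biUnion_le
      _ ≤ #P * (t - 1) := by simpa using sum_le_sum hagree
      _ ≤ c * (t - 1) := Nat.mul_le_mul_right _ hPc
  have : l ≤ (c + 1) * (t - 1) :=
    calc l = #(univ : Finset (Fin l)) := (card_fin l).symm
      _ ≤ #(univ.filter (x · = inf)) + #(P.biUnion agree) :=
        (card_le_card hcover).trans (card_union_le _ _)
      _ ≤ (t - 1) + c * (t - 1) := Nat.add_le_add (hP.1 x hxC) hbiUnion
      _ = (c + 1) * (t - 1) := by ring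
  exact absurd this (not_le.2 hl)

theorem PropertyP.image_comp {T : Type*} [DecidableEq T] (hP : PropertyP t inf C) {e : S → T}
    (he : Function.Injective e) : PropertyP t (e inf) ((e ∘ ·) '' C) := by
  refine ⟨?_, ?_⟩
  · rintro _ ⟨x, hx, rfl⟩
    simpa only [Function.comp_apply, he.eq_iff] using hP.1 x hx
  · rintro _ ⟨x, hx, rfl⟩ _ ⟨y, hy, rfl⟩ I hI hxy
    simp only [Function.comp_apply, he.eq_iff, he.ne_iff] at hxy
    rw [hP.2 x hx y hy I hI hxy]

end Frameproof

theorem IsOA.eq_of_agree {l N t : ℕ} {S : Type*} {A : Fin l → Fin N → S} (hA : IsOA t A)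
    {j j' : Fin N} {I : Finset (Fin l)} (hI : t ≤ #I) (h : ∀ i ∈ I, A i j = A i j') :
    j = j' := by
  obtain ⟨J, hJI, hJ⟩ := exists_subset_card_eq hI
  set rows := J.orderEmbOfFin hJ
  obtain ⟨_, -, huniq⟩ := hA rows rows.injective fun k => A (rows k) j
  exact (huniq j fun _ => rfl).trans
    (huniq j' fun k => (h _ (hJI (J.orderEmbOfFin_mem hJ k))).symm).symm

theorem IsOA.card_agree_le {l N t : ℕ} {S : Type*} [DecidableEq S] {A : Fin l → Fin N → S}
    (hA : IsOA t A) {j j' : Fin N} (hj : j ≠ j') :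
    #(univ.filter fun i => A i j = A i j') ≤ t - 1 := by
  by_contra! h
  exact hj (hA.eq_of_agree (I := univ.filter fun i => A i j = A i j') (by omega)
    fun i hi => (mem_filter.1 hi).2)

section ReedSolomon

variable {F : Type*} [Field F] {t : ℕ}

/-- Evaluation on the projective line `Option F` of a polynomial of degree `< t`: the point at
infinity `none` reads off the coefficient of `X ^ (t - 1)`. -/
def projEval (t : ℕ) (p : F[X]) : Option F → F
  | none => p.coeff (t - 1)
  | some a => p.eval a

theorem projEval_sub (p q : F[X]) (x : Option F) :
    projEval t (p - q) x = projEval t p x - projEval t q x := by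
  cases x <;> simp [projEval]

theorem eq_zero_of_projEval_eq_zero {p : F[X]} (hp : p.degree < t) {I : Finset (Option F)}
    (hI : t ≤ #I) (h : ∀ x ∈ I, projEval t p x = 0) : p = 0 := by
  by_contra hp0
  have hroots : #I.eraseNone ≤ p.natDegree :=
    not_lt.1 fun hlt => hp0 <| p.eq_zero_of_natDegree_lt_card_of_eval_eq_zero' _
      (fun a ha => h (some a) (mem_eraseNone.1 ha)) hlt
  have hdeg : p.natDegree < t := (natDegree_lt_iff_degree_lt hp0).2 hp
  by_cases hnone : none ∈ I
  · have hlead : p.natDegree ≠ t - 1 := fun hd =>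
      leadingCoeff_ne_zero.2 hp0 (by rw [leadingCoeff, hd]; exact h none hnone)
    have := card_eraseNone_of_mem hnone
    omega
  · have := card_eraseNone_of_not_mem hnone
    omega

theorem eq_of_projEval_eq {p q : F[X]} (hp : p ∈ F[X]_t) (hq : q ∈ F[X]_t)
    {I : Finset (Option F)} (hI : t ≤ #I) (h : ∀ x ∈ I, projEval t p x = projEval t q x) :
    p = q :=
  sub_eq_zero.1 <| eq_zero_of_projEval_eq_zero (mem_degreeLT.1 (sub_mem hp hq)) hI
    fun x hx => by rw [projEval_sub, h x hx, sub_self]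

end ReedSolomon

section Construction

variable {F : Type*} [Field F] {l n N t : ℕ}

/-- `finSuccEquiv' b` sends `b` to `none = ∞` and relabels the other `n` symbols by `Fin n`. -/
def oaWord (A : Fin l → Fin N → Fin (n + 1)) (j₀ : Fin N) (pt : Fin l → Option F) (t : ℕ)
    (j : Fin N) (p : F[X]) (i : Fin l) : Option (Fin n × F) :=
  (finSuccEquiv' (A i j₀) (A i j)).map (·, projEval t p (pt i))

variable {A : Fin l → Fin N → Fin (n + 1)} {j₀ : Fin N} {pt : Fin l → Option F}

theorem oaWord_eq_none_iff {j : Fin N} {p : F[X]} {i : Fin l} :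
    oaWord A j₀ pt t j p i = none ↔ A i j = A i j₀ := by
  rw [oaWord, Option.map_eq_none_iff, finSuccEquiv'_eq_none, eq_comm]

theorem apply_eq_and_projEval_eq_of_oaWord_eq {j j' : Fin N} {p p' : F[X]} {i : Fin l}
    (h : oaWord A j₀ pt t j p i = oaWord A j₀ pt t j' p' i)
    (hne : oaWord A j₀ pt t j p i ≠ none) :
    A i j = A i j' ∧ projEval t p (pt i) = projEval t p' (pt i) := by
  obtain ⟨a, ha⟩ := Option.ne_none_iff_exists'.1 hne
  obtain ⟨b, hb, hab⟩ := Option.map_eq_some_iff.1 ha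
  obtain ⟨b', hb', hab'⟩ := Option.map_eq_some_iff.1 (h ▸ ha)
  obtain ⟨rfl, hval⟩ := Prod.ext_iff.1 (hab.trans hab'.symm)
  exact ⟨(finSuccEquiv' (A i j₀)).injective (hb.trans hb'.symm), hval⟩

abbrev oaCodeword (A : Fin l → Fin N → Fin (n + 1)) (j₀ : Fin N) (pt : Fin l → Option F)
    (t : ℕ) (d : {j // j ≠ j₀} × F[X]_t) : Fin l → Option (Fin n × F) :=
  oaWord A j₀ pt t d.1 d.2

variable [DecidableEq F]

theorem eq_of_oaWord_agree (hA : IsOA t A) (hpt : Function.Injective pt) {j j' : Fin N}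
    {p p' : F[X]} (hp : p ∈ F[X]_t) (hp' : p' ∈ F[X]_t) {I : Finset (Fin l)} (hI : t ≤ #I)
    (h : ∀ i ∈ I, oaWord A j₀ pt t j p i = oaWord A j₀ pt t j' p' i ∧
      oaWord A j₀ pt t j p i ≠ none) :
    j = j' ∧ p = p' := by
  have hdecode i (hi : i ∈ I) := apply_eq_and_projEval_eq_of_oaWord_eq (h i hi).1 (h i hi).2
  refine ⟨hA.eq_of_agree hI fun i hi => (hdecode i hi).1, ?_⟩
  refine eq_of_projEval_eq hp hp' (I := I.image pt) (by rwa [card_image_of_injective I hpt]) ?_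
  simp only [mem_image, forall_exists_index, and_imp]
  rintro _ i hi rfl
  exact (hdecode i hi).2

theorem propertyP_range_oaCodeword (hA : IsOA t A) (hpt : Function.Injective pt) :
    PropertyP t none (Set.range (oaCodeword A j₀ pt t)) := by
  refine ⟨?_, ?_⟩
  · rintro _ ⟨d, rfl⟩
    simpa only [oaCodeword, oaWord_eq_none_iff] using hA.card_agree_le d.1.2
  · rintro _ ⟨d, rfl⟩ _ ⟨d', rfl⟩ I hI h
    obtain ⟨hj, hp⟩ := eq_of_oaWord_agree hA hpt d.2.2 d'.2.2 hI h
    rw [Prod.ext (Subtype.ext hj) (Subtype.ext hp)]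

/-- A codeword has at most `t - 1` symbols `∞`, hence, as `l ≥ 2t - 1`, at least `t` informative
ones. -/
theorem oaCodeword_injective (hA : IsOA t A) (hpt : Function.Injective pt) (hl : 2 * t - 1 ≤ l) :
    Function.Injective (oaCodeword A j₀ pt t) := by
  intro d d' h
  have hnone := (propertyP_range_oaCodeword hA hpt).1 _ ⟨d, rfl⟩
  have hI : t ≤ #(univ.filter fun i => ¬oaCodeword A j₀ pt t d i = none) := by
    have := card_filter_add_card_filter_not (s := univ)
      fun i => oaCodeword A j₀ pt t d i = none
    rw [card_univ, Fintype.card_fin] at this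
    omega
  obtain ⟨hj, hp⟩ := eq_of_oaWord_agree hA hpt d.2.2 d'.2.2 hI
    fun i hi => ⟨congrFun h i, (mem_filter.1 hi).2⟩
  exact Prod.ext (Subtype.ext hj) (Subtype.ext hp)

end Construction

theorem frameproof_from_OA_general {l s t c r m : ℕ}
    (hm : ∃ p k : ℕ, p.Prime ∧ 0 < k ∧ m = p ^ k)
    (hml : l - 1 ≤ m) (hlt : 2 * t - 1 ≤ l)
    (hl : l = c * (t - 1) + r) (hr1 : t ≤ r)
    (hOA : ∃ A : Fin l → Fin (s ^ t) → Fin s, IsOA t A) :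
    ∃ C : Set (Fin l → Fin ((s - 1) * m + 1)),
      IsFrameproof c C ∧ C.ncard = (s ^ t - 1) * m ^ t := by
  obtain ⟨A, hA⟩ := hOA
  rcases Nat.lt_or_ge (s ^ t) 2 with hst | hst
  · refine ⟨∅, fun P hP _ => ?_, ?_⟩
    · rw [Set.subset_empty_iff.1 hP, Set.inter_empty]
    · rw [Set.ncard_empty, Nat.sub_eq_zero_of_le (by omega), zero_mul]
  have ht : 0 < t := Nat.pos_of_ne_zero (by rintro rfl; simp at hst)
  obtain ⟨n, rfl⟩ : ∃ n, s = n + 1 :=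
    Nat.exists_eq_add_one.2 (Nat.pos_of_ne_zero (by rintro rfl; simp [ht.ne'] at hst))
  obtain ⟨p, k, hp, hk, rfl⟩ := hm
  have := Fact.mk hp
  classical
  let F := GaloisField p k
  have := Fintype.ofFinite F
  have hF : Fintype.card F = p ^ k := by
    rw [← Nat.card_eq_fintype_card, GaloisField.card p k hk.ne']
  obtain ⟨pt⟩ : Nonempty (Fin l ↪ Option F) := Function.Embedding.nonempty_of_card_le <| by
    rw [Fintype.card_option, hF, Fintype.card_fin]
    omega
  let j₀ : Fin ((n + 1) ^ t) := ⟨0, by omega⟩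
  let e : Option (Fin n × F) ≃ Fin ((n + 1 - 1) * p ^ k + 1) :=
    Finite.equivFinOfCardEq (by simp [hF])
  refine ⟨(e ∘ ·) '' Set.range (oaCodeword A j₀ pt t),
    ((propertyP_range_oaCodeword hA pt.injective).image_comp e.injective).isFrameproof ?_, ?_⟩
  · have : (c + 1) * (t - 1) = c * (t - 1) + (t - 1) := by ring
    omega
  rw [Set.ncard_image_of_injective _ e.injective.comp_left,
    Set.ncard_range_of_injective (oaCodeword_injective hA pt.injective hlt), Nat.card_prod,
    Nat.card_congr (degreeLTEquiv F t).toEquiv, Nat.card_fun, Nat.card_eq_fintype_card (α := F),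
    hF, Nat.card_fin]
  simp

/-- From an `OA(t,l,s)` of index 1 and a prime power `m ≥ l - 1`, there is a
`q`-ary `c`-frameproof code of length `l` of cardinality
`((s^t - 1)/(s-1)^t)(q-1)^t = (s^t - 1) * m^t`, where `q = (s-1)m + 1`. -/
theorem frameproof_from_OA {l s t c r m : ℕ}
    (hm : ∃ p k : ℕ, p.Prime ∧ 0 < k ∧ m = p ^ k)
    (hml : l - 1 ≤ m) (hlt : 2 * t - 1 ≤ l) (htc : t ≤ c)
    (hl : l = c * (t - 1) + r) (hr1 : t ≤ r) (hr2 : r ≤ c)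
    (hOA : ∃ A : Fin l → Fin (s ^ t) → Fin s, IsOA t A) :
    ∃ C : Set (Fin l → Fin ((s - 1) * m + 1)),
      IsFrameproof c C ∧ C.ncard = (s ^ t - 1) * m ^ t :=
  frameproof_from_OA_general hm hml hlt hl hr1 hOA
end

section
/- Let S be a finite set of size s containing ∞, and let A be an OA(t,l,s) of index 1 whose first column is the all-∞ vector. Then every other column of A contains at most t-1 coordinates equal to ∞, and the set of columns of A other than the all-∞ column forms an s-ary c-frameproof code of length l and cardinality s^t - 1 satisfying Property P(t), for any integer c ≥ t with l = c(t-1)+r, t ≤ r ≤ c. -/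
open Finset

/-! Any `t` rows of an index-1 orthogonal array determine the column, so distinct columns agree
in fewer than `t` coordinates; comparing with the all-`inf` column bounds the number of `inf`s in
the others. A descendant of at most `c` codewords that lies outside the coalition agrees with each
of them in at most `t - 1` places, hence covers at most `c (t - 1) < l` coordinates: impossible. -/

theorem isFrameproof_of_card_agree_le {l : ℕ} {F : Type*} [DecidableEq F]
    {C : Set (Fin l → F)} {c d : ℕ}
    (hC : ∀ x ∈ C, ∀ y ∈ C, x ≠ y → (univ.filter fun i => x i = y i).card ≤ d)
    (hl : c * d < l) : IsFrameproof c C := by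
  intro P hPC hPc
  refine subset_antisymm ?_ fun x hx => ⟨fun i => ⟨x, hx, rfl⟩, hPC hx⟩
  intro x ⟨hdesc, hxC⟩
  by_contra hxP
  have hcover : (univ : Finset (Fin l)) ⊆ P.biUnion fun y => univ.filter fun i => x i = y i := by
    intro i _
    obtain ⟨y, hy, hxy⟩ := hdesc i
    exact mem_biUnion.mpr ⟨y, hy, mem_filter.mpr ⟨mem_univ i, hxy⟩⟩
  have : l ≤ c * d :=
    calc l = (univ : Finset (Fin l)).card := (card_fin l).symm
      _ ≤ (P.biUnion fun y => univ.filter fun i => x i = y i).card := card_le_card hcover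
      _ ≤ ∑ y ∈ P, (univ.filter fun i => x i = y i).card := card_biUnion_le
      _ ≤ ∑ _y ∈ P, d :=
          sum_le_sum fun y hy => hC x hxC y (hPC hy) fun h => hxP (h ▸ hy)
      _ = P.card * d := by rw [sum_const, smul_eq_mul]
      _ ≤ c * d := Nat.mul_le_mul_right d hPc
  omega

theorem isFrameproof_empty {l : ℕ} {F : Type*} (c : ℕ) :
    IsFrameproof c (∅ : Set (Fin l → F)) := by
  intro P hP _
  rw [Set.subset_empty_iff, coe_eq_empty] at hP
  simp [hP]

namespace IsOA

variable {l N t : ℕ} {S : Type*} {A : Fin l → Fin N → S}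

theorem eq_of_agree_s19 (hOA : IsOA t A) {j j' : Fin N} {I : Finset (Fin l)} (hI : t ≤ I.card)
    (hagree : ∀ i ∈ I, A i j = A i j') : j = j' := by
  obtain ⟨J, hJI, hJ⟩ := exists_subset_card_eq hI
  let e := J.orderIsoOfFin hJ
  have hrows : Function.Injective fun k => (e k : Fin l) :=
    fun _ _ h => e.injective (Subtype.ext h)
  obtain ⟨_, _, huniq⟩ := hOA _ hrows fun k => A (e k) j
  exact (huniq j fun _ => rfl).trans (huniq j' fun k => (hagree _ (hJI (e k).2)).symm).symm

theorem eq_of_strength_zero (hOA : IsOA 0 A) (j j' : Fin N) : j = j' :=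
  hOA.eq_of_agree_s19 (I := ∅) le_rfl nofun

theorem card_agree_lt [DecidableEq S] (hOA : IsOA t A) {j j' : Fin N} (h : j ≠ j') :
    (univ.filter fun i => A i j = A i j').card < t :=
  Nat.lt_of_not_le fun hI => h (hOA.eq_of_agree_s19 hI fun _ hi => (mem_filter.mp hi).2)

theorem injective_col (hOA : IsOA t A) (ht : t ≤ l) : Function.Injective fun j i => A i j :=
  fun _ _ h => hOA.eq_of_agree_s19 (I := univ) (by simpa using ht) fun i _ => congrFun h i

theorem ncard_cols_ne (hOA : IsOA t A) (ht : t ≤ l) (j0 : Fin N) :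
    {x : Fin l → S | ∃ j ≠ j0, x = fun i => A i j}.ncard = N - 1 := by
  have himage : {x : Fin l → S | ∃ j ≠ j0, x = fun i => A i j} = (fun j i => A i j) '' {j0}ᶜ := by
    ext x
    simp [eq_comm]
  rw [himage, Set.ncard_image_of_injective _ (hOA.injective_col ht), Set.ncard_compl,
    Set.ncard_singleton, Nat.card_eq_fintype_card, Fintype.card_fin]

end IsOA

theorem frameproof_OA_propertyP_general {l s t c r : ℕ} {S : Type*} [Fintype S]
    [DecidableEq S] (inf : S)
    (A : Fin l → Fin (s ^ t) → S) (hOA : IsOA t A)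
    (j0 : Fin (s ^ t)) (hj0 : ∀ i, A i j0 = inf)
    (hl : l = c * (t - 1) + r) (hr1 : t ≤ r) :
    (∀ j ≠ j0, (Finset.univ.filter fun i => A i j = inf).card ≤ t - 1) ∧
    IsFrameproof c {x : Fin l → S | ∃ j ≠ j0, x = fun i => A i j} ∧
    Set.ncard {x : Fin l → S | ∃ j ≠ j0, x = fun i => A i j} = s ^ t - 1 ∧
    PropertyP t inf {x : Fin l → S | ∃ j ≠ j0, x = fun i => A i j} := by
  have hinf : ∀ j ≠ j0, (univ.filter fun i => A i j = inf).card ≤ t - 1 := fun j hj => by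
    have := hOA.card_agree_lt hj
    simp only [hj0] at this
    omega
  refine ⟨hinf, ?_, hOA.ncard_cols_ne (by omega) j0, ?_, ?_⟩
  · obtain rfl | ht := Nat.eq_zero_or_pos t
    · have hempty : {x : Fin l → S | ∃ j ≠ j0, x = fun i => A i j} = ∅ :=
        Set.eq_empty_of_forall_notMem fun _ ⟨j, hj, _⟩ => hj (hOA.eq_of_strength_zero j j0)
      rw [hempty]
      exact isFrameproof_empty c
    · refine isFrameproof_of_card_agree_le (d := t - 1) ?_ (by omega)
      rintro _ ⟨j, -, rfl⟩ _ ⟨j', -, rfl⟩ hne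
      exact Nat.le_sub_one_of_lt (hOA.card_agree_lt (j := j) (j' := j') fun h => hne (by rw [h]))
  · rintro _ ⟨j, hj, rfl⟩
    exact hinf j hj
  · rintro _ ⟨j, -, rfl⟩ _ ⟨j', -, rfl⟩ I hI hagree
    rw [hOA.eq_of_agree_s19 hI fun i hi => (hagree i hi).1]

/-- If the first column of an `OA(t,l,s)` of index 1 is the all-`inf` column,
then every other column has at most `t-1` coordinates equal to `inf`, and the
remaining columns form an `s`-ary `c`-frameproof code of cardinality `s^t - 1`
satisfying Property P(t). -/
theorem frameproof_OA_propertyP {l s t c r : ℕ} {S : Type*} [Fintype S]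
    [DecidableEq S] (hs : Fintype.card S = s) (hs2 : 2 ≤ s) (inf : S)
    (A : Fin l → Fin (s ^ t) → S) (hOA : IsOA t A)
    (j0 : Fin (s ^ t)) (hj0 : ∀ i, A i j0 = inf)
    (htc : t ≤ c) (hl : l = c * (t - 1) + r) (hr1 : t ≤ r) (hr2 : r ≤ c) :
    (∀ j ≠ j0, (Finset.univ.filter fun i => A i j = inf).card ≤ t - 1) ∧
    IsFrameproof c {x : Fin l → S | ∃ j ≠ j0, x = fun i => A i j} ∧
    Set.ncard {x : Fin l → S | ∃ j ≠ j0, x = fun i => A i j} = s ^ t - 1 ∧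
    PropertyP t inf {x : Fin l → S | ∃ j ≠ j0, x = fun i => A i j} :=
  frameproof_OA_propertyP_general inf A hOA j0 hj0 hl hr1
end
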